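/- For the path-integral Monte Carlo implementation of quantum annealing of the transverse-field Ising model, the inhomogeneous Markov chain generated by the Suzuki-Trotter Boltzmann factor is strongly ergodic, converging to the equilibrium state of the classical interaction term alone, if the transverse field satisfies Γ(t) ≥ (M/β) · artanh( (t+2)^{−2/(R·L1)} ) for all t ≥ 0. -/

import Mathlib

open Finset Filter

namespace QAPaper

variable {S : Type*}

/-- A probability distribution on the finite state space `S`, viewed as a vector. -/
def IsProbVec [Fintype S] (p : S → ℝ) : Prop :=
  (∀ x, 0 ≤ p x) ∧ ∑ x, p x = 1

/-- The ℓ¹ norm distance `‖p - p'‖ = ∑ₓ |p(x) - p'(x)|`. -/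
noncomputable def dist1 [Fintype S] (p p' : S → ℝ) : ℝ := ∑ x, |p x - p' x|

/-- A column-stochastic matrix: entries nonnegative, columns sum to one. -/
def IsStochastic [Fintype S] (G : Matrix S S ℝ) : Prop :=
  (∀ y x, 0 ≤ G y x) ∧ ∀ x, ∑ y, G y x = 1

/-- `prodG G t t0 = G (t-1) * G (t-2) * ⋯ * G t0`. -/
noncomputable def prodG [Fintype S] [DecidableEq S] (G : ℕ → Matrix S S ℝ) (t t0 : ℕ) :
    Matrix S S ℝ :=
  (((List.range (t - t0)).map fun k => G (t0 + k)).reverse).prod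

/-- Weak ergodicity: the distribution forgets its initial condition. -/
def WeaklyErgodic [Fintype S] [DecidableEq S] (G : ℕ → Matrix S S ℝ) : Prop :=
  ∀ t0 : ℕ, ∀ ε > (0 : ℝ), ∃ T : ℕ, ∀ t ≥ T,
    ∀ p0 p0' : S → ℝ, IsProbVec p0 → IsProbVec p0' →
      dist1 ((prodG G t t0).mulVec p0) ((prodG G t t0).mulVec p0') ≤ ε

/-- Strong ergodicity towards a fixed distribution `r`. -/
def StronglyErgodicTo [Fintype S] [DecidableEq S] (G : ℕ → Matrix S S ℝ) (r : S → ℝ) : Prop :=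
  ∀ t0 : ℕ, ∀ ε > (0 : ℝ), ∃ T : ℕ, ∀ t ≥ T,
    ∀ p0 : S → ℝ, IsProbVec p0 → dist1 ((prodG G t t0).mulVec p0) r ≤ ε

/-- Strong ergodicity. -/
def StronglyErgodic [Fintype S] [DecidableEq S] (G : ℕ → Matrix S S ℝ) : Prop :=
  ∃ r : S → ℝ, IsProbVec r ∧ StronglyErgodicTo G r

/-- The coefficient of ergodicity `α(G)`. -/
noncomputable def ergCoeff [Fintype S] [Nonempty S] (G : Matrix S S ℝ) : ℝ :=
  1 - Finset.univ.inf' Finset.univ_nonempty fun p : S × S => ∑ z, min (G z p.1) (G z p.2)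

/-- A generation probability: symmetric, vanishing on the diagonal, columns summing
to one, and irreducible. -/
structure IsGenProb [Fintype S] (P : S → S → ℝ) : Prop where
  symm : ∀ x y, P y x = P x y
  nonneg : ∀ x y, 0 ≤ P y x
  diag_zero : ∀ x, P x x = 0
  sum_one : ∀ x, ∑ y, P y x = 1
  irreducible : ∀ x y : S, ∃ n > 0, ∃ z : ℕ → S,
    z 0 = x ∧ z n = y ∧ ∀ k < n, 0 < P (z (k + 1)) (z k)

/-- An acceptance function: monotone increasing, valued in `[0,1]`,
with `g (1/u) = g u / u`. -/
structure IsAcceptFn (g : ℝ → ℝ) : Prop where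
  mono : MonotoneOn g (Set.Ici (0 : ℝ))
  maps : ∀ u : ℝ, 0 ≤ u → g u ∈ Set.Icc (0 : ℝ) 1
  ratio : ∀ u : ℝ, 0 < u → g (1 / u) = g u / u

/-- Partition function `Z(t)`. -/
noncomputable def Zfun [Fintype S] (F0 F1 : S → ℝ) (T0 : ℝ) (T1 : ℕ → ℝ) (t : ℕ) : ℝ :=
  ∑ x, Real.exp (-(F0 x) / T0 - F1 x / T1 t)

/-- Time-dependent Boltzmann distribution `q(x;t)`. -/
noncomputable def qB [Fintype S] (F0 F1 : S → ℝ) (T0 : ℝ) (T1 : ℕ → ℝ) (t : ℕ) (x : S) : ℝ :=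
  Real.exp (-(F0 x) / T0 - F1 x / T1 t) / Zfun F0 F1 T0 T1 t

/-- Transition matrix built from a generation probability `P` and an
acceptance probability `A`. -/
noncomputable def GmatOf [Fintype S] [DecidableEq S] (P : S → S → ℝ) (A : ℕ → S → S → ℝ)
    (t : ℕ) : Matrix S S ℝ :=
  Matrix.of fun y x => if y = x then 1 - ∑ z, P z x * A t z x else P y x * A t y x

/-- Transition matrix of path-integral Monte Carlo quantum annealing. -/
noncomputable def Gpimc [Fintype S] [DecidableEq S] (P : S → S → ℝ) (g : ℝ → ℝ)
    (F0 F1 : S → ℝ) (T0 : ℝ) (T1 : ℕ → ℝ) : ℕ → Matrix S S ℝ :=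
  GmatOf P fun t y x => g (qB F0 F1 T0 T1 t y / qB F0 F1 T0 T1 t x)

/-- The set `S_m` of local maxima of `F1` with respect to `P`. -/
def Sm [Fintype S] (P : S → S → ℝ) (F1 : S → ℝ) : Set S :=
  {x | ∀ y, 0 < P y x → F1 y ≤ F1 x}

/-- `x` can reach `y` in exactly `n` elementary transitions. -/
def ReachIn (P : S → S → ℝ) (n : ℕ) (x y : S) : Prop :=
  ∃ f : ℕ → S, f 0 = x ∧ f n = y ∧ ∀ k < n, 0 < P (f (k + 1)) (f k)

/-- `d(y,x)`: the minimum number of transitions needed to go from `x` to `y`. -/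
noncomputable def dSteps (P : S → S → ℝ) (x y : S) : ℕ :=
  sInf {n | ReachIn P n x y}

/-- `R = min { max { d(y,x) | y ∈ S } | x ∈ S \ S_m }`. -/
noncomputable def Rnum [Fintype S] (P : S → S → ℝ) (F1 : S → ℝ) : ℕ :=
  sInf {r | ∃ x, x ∉ Sm P F1 ∧ r = Finset.univ.sup fun y => dSteps P x y}

/-- The maximum change of `F` in a single transition. -/
noncomputable def Lmax [Fintype S] (P : S → S → ℝ) (F : S → ℝ) : ℝ :=
  sSup {v | ∃ x y : S, 0 < P y x ∧ v = |F x - F y|}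

/-- The minimum nonvanishing value of the generation probability. -/
noncomputable def wmin [Fintype S] (P : S → S → ℝ) : ℝ :=
  sInf {v | ∃ x y : S, 0 < P y x ∧ v = P y x}

/-- The set of global minima of `F1`. -/
def S1min [Fintype S] (F1 : S → ℝ) : Set S := {x | ∀ y, F1 x ≤ F1 y}

/-- The limiting distribution: proportional to `exp (-F0 x / T0)` on the set of
global minima of `F1`, and zero elsewhere. -/
noncomputable def rLimit [Fintype S] (F0 F1 : S → ℝ) (T0 : ℝ) (x : S) : ℝ :=
  if ∀ y, F1 x ≤ F1 y then
    Real.exp (-(F0 x) / T0) /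
      ∑ y ∈ Finset.univ.filter (fun y => ∀ z, F1 y ≤ F1 z), Real.exp (-(F0 y) / T0)
  else 0

/-- The ±1 value of a Boolean spin. -/
noncomputable def spin (b : Bool) : ℝ := if b then 1 else -1

/-- Classical Ising energy `E0(x) = -∑_{i<j} J_ij x_i x_j`. -/
noncomputable def E0def (N : ℕ) (J : Fin N → Fin N → ℝ) (x : Fin N → Bool) : ℝ :=
  -∑ p ∈ Finset.univ.filter (fun p : Fin N × Fin N => p.1 < p.2),
    J p.1 p.2 * spin (x p.1) * spin (x p.2)

/-- Hamming distance between spin configurations. -/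
def hamming (N : ℕ) (x y : Fin N → Bool) : ℕ :=
  (Finset.univ.filter fun i => x i ≠ y i).card

/-- GFMC weight `w(x;t) = 1 - Δt (E0(x) - E_T) + N Δt Γ(t)`. -/
noncomputable def wgt (N : ℕ) (J : Fin N → Fin N → ℝ) (Δt ET : ℝ) (Γ : ℕ → ℝ) (t : ℕ)
    (x : Fin N → Bool) : ℝ :=
  1 - Δt * (E0def N J x - ET) + N * Δt * Γ t

/-- The normalized GFMC transition probability `G1(y,x;t)`. -/
noncomputable def G1mat (N : ℕ) (J : Fin N → Fin N → ℝ) (Δt ET : ℝ) (Γ : ℕ → ℝ) (t : ℕ) :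
    Matrix (Fin N → Bool) (Fin N → Bool) ℝ :=
  Matrix.of fun y x =>
    if y = x then 1 - N * Δt * Γ t / wgt N J Δt ET Γ t x
    else if hamming N x y = 1 then Δt * Γ t / wgt N J Δt ET Γ t x
    else 0

/-- `E_min = min { E0(x) | x ∈ S }`. -/
noncomputable def Emin (N : ℕ) (J : Fin N → Fin N → ℝ) : ℝ :=
  Finset.univ.inf' Finset.univ_nonempty (E0def N J)

/-- Stationary distribution `q(x;t) = w(x;t) / ∑_y w(y;t)` of GFMC. -/
noncomputable def qGFMC (N : ℕ) (J : Fin N → Fin N → ℝ) (Δt ET : ℝ) (Γ : ℕ → ℝ) (t : ℕ)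
    (x : Fin N → Bool) : ℝ :=
  wgt N J Δt ET Γ t x / ∑ y, wgt N J Δt ET Γ t y

/-- The alternative GFMC transition probability `G2(y,x;t)`. -/
noncomputable def G2mat (N : ℕ) (Δt : ℝ) (Γ : ℕ → ℝ) (t : ℕ) :
    Matrix (Fin N → Bool) (Fin N → Bool) ℝ :=
  Matrix.of fun y x =>
    (Real.cosh (Δt * Γ t) * Real.exp (-(Δt * Γ t))) ^ N *
      Real.tanh (Δt * Γ t) ^ hamming N x y

/-- Inverse hyperbolic tangent. -/
noncomputable def artanh (x : ℝ) : ℝ := (1 / 2) * Real.log ((1 + x) / (1 - x))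

/-- The cost function of the Suzuki–Trotter representation of the TFIM:
`F0(x) = -(β/M) ∑_k ∑_{ij} J_ij S_i^(k) S_j^(k)`. -/
noncomputable def F0tfim (N M : ℕ) (β : ℝ) (J : Fin (N + 1) → Fin (N + 1) → ℝ)
    (x : Fin (N + 1) × Fin M → Bool) : ℝ :=
  -(β / M) * ∑ k : Fin M, ∑ i : Fin (N + 1), ∑ j : Fin (N + 1),
    J i j * spin (x (i, k)) * spin (x (j, k))

/-- The kinetic term of the Suzuki–Trotter representation of the TFIM:
`F1(x) = -∑_k ∑_i S_i^(k) S_i^(k+1)` with periodic boundary along the Trotter direction. -/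
noncomputable def F1tfim (N M : ℕ) [NeZero M] (x : Fin (N + 1) × Fin M → Bool) : ℝ :=
  -∑ k : Fin M, ∑ i : Fin (N + 1), spin (x (i, k)) * spin (x (i, k + 1))

/-- The ferromagnetic coupling `γ(t) = (1/2) log coth (β Γ(t) / M)` between Trotter slices. -/
noncomputable def γtfim (M : ℕ) (β : ℝ) (Γ : ℕ → ℝ) (t : ℕ) : ℝ :=
  (1 / 2) * Real.log (1 / Real.tanh (β * Γ t / M))

/-- Tsallis-type generalized acceptance ratio `u(y,x;t)`. -/
noncomputable def uGen {S : Type*} (F0 F1 : S → ℝ) (T0 : ℝ) (T1 : ℕ → ℝ) (qp : ℝ) (t : ℕ)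
    (y x : S) : ℝ :=
  Real.exp (-(F0 y - F0 x) / T0) *
    (1 + (qp - 1) * (F1 y - F1 x) / T1 t) ^ (1 / (1 - qp))

/-!
The PIMC chain is a Metropolis chain whose stationary distribution at time `t` is, by detailed
balance, the Boltzmann distribution at the inter-slice coupling `γ(t)`. Strong ergodicity follows
from weak ergodicity once these stationary distributions have finite total variation in time
(each coordinate is eventually monotone in `γ`) and converge, as `γ → ∞`, to the `exp (-F0)`
weighted distribution on the ground states of `F1`.

For weak ergodicity take a state `z₀` that is not a local maximum of `F1` and reaches every state
within `R` steps. Every allowed move is accepted with probability `≳ exp (-γ L1)`, and `z₀` stays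
put with probability bounded below once its uphill move is rarely accepted, so over a block of
`R` steps every state reaches `z₀` with probability `c ≳ exp (-R L1 γ)`. By Doeblin's bound each
block contracts differences of distributions by the factor `1 - c`, and the schedule gives
`γ(t) ≤ log (t + 2) / (R L1)`, so `c ≳ 1 / t`: the `c` are not summable and the product of the
factors vanishes.
-/

open scoped Matrix Topology

section StochasticMatrix

variable [Fintype S]

lemma IsStochastic.mul {A B : Matrix S S ℝ} (hA : IsStochastic A) (hB : IsStochastic B) :
    IsStochastic (A * B) := by
  refine ⟨fun y x => sum_nonneg fun z _ => mul_nonneg (hA.1 y z) (hB.1 z x), fun x => ?_⟩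
  simp only [Matrix.mul_apply]
  rw [sum_comm]
  simp only [← sum_mul, hA.2, one_mul, hB.2]

lemma IsStochastic.sum_mulVec {G : Matrix S S ℝ} (hG : IsStochastic G) (v : S → ℝ) :
    ∑ z, (G *ᵥ v) z = ∑ x, v x := by
  simp only [Matrix.mulVec, dotProduct]
  rw [sum_comm]
  simp only [← sum_mul, hG.2, one_mul]

lemma IsStochastic.isProbVec_mulVec {G : Matrix S S ℝ} (hG : IsStochastic G) {p : S → ℝ}
    (hp : IsProbVec p) : IsProbVec (G *ᵥ p) :=
  ⟨fun z => sum_nonneg fun x _ => mul_nonneg (hG.1 z x) (hp.1 x), by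
    rw [IsStochastic.sum_mulVec hG, hp.2]⟩

lemma sum_abs_mulVec_le_of_nonneg {H : Matrix S S ℝ} (hH : ∀ z x, 0 ≤ H z x) (v : S → ℝ) :
    ∑ z, |(H *ᵥ v) z| ≤ ∑ x, (∑ z, H z x) * |v x| := by
  calc ∑ z, |(H *ᵥ v) z| ≤ ∑ z, ∑ x, H z x * |v x| :=
        sum_le_sum fun z _ => (abs_sum_le_sum_abs _ _).trans_eq <|
          sum_congr rfl fun x _ => by rw [abs_mul, abs_of_nonneg (hH z x)]
    _ = ∑ x, (∑ z, H z x) * |v x| := by rw [sum_comm]; simp only [sum_mul]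

lemma IsStochastic.sum_abs_mulVec_le {G : Matrix S S ℝ} (hG : IsStochastic G) (v : S → ℝ) :
    ∑ z, |(G *ᵥ v) z| ≤ ∑ x, |v x| := by
  simpa only [hG.2, one_mul] using sum_abs_mulVec_le_of_nonneg hG.1 v

lemma IsStochastic.sum_abs_mulVec_le_of_row {G : Matrix S S ℝ} (hG : IsStochastic G) {z₀ : S}
    {c : ℝ} (hc : ∀ x, c ≤ G z₀ x) {v : S → ℝ} (hv : ∑ x, v x = 0) :
    ∑ z, |(G *ᵥ v) z| ≤ (1 - c) * ∑ x, |v x| := by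
  classical
  -- Removing `c` from row `z₀` leaves `G *ᵥ v` unchanged, since `v` has zero sum.
  set H : Matrix S S ℝ := Matrix.of fun z x => G z x - if z = z₀ then c else 0
  have hHv : G *ᵥ v = H *ᵥ v := by
    ext z
    simp only [H, Matrix.mulVec, dotProduct, Matrix.of_apply, sub_mul, sum_sub_distrib,
      ← mul_sum, hv, mul_zero, sub_zero]
  have hH : ∀ z x, 0 ≤ H z x := fun z x => by
    by_cases h : z = z₀ <;> simp [H, h, hG.1 z x, hc x]
  have hcol : ∀ x, ∑ z, H z x = 1 - c := fun x => by
    simp [H, sum_sub_distrib, hG.2 x]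
  rw [hHv, mul_sum]
  simpa only [hcol] using sum_abs_mulVec_le_of_nonneg hH v

lemma IsStochastic.apply_le_one {G : Matrix S S ℝ} (hG : IsStochastic G) (y x : S) :
    G y x ≤ 1 :=
  (single_le_sum (fun z _ => hG.1 z x) (mem_univ y)).trans_eq (hG.2 x)

lemma dist1_comm (a b : S → ℝ) : dist1 a b = dist1 b a :=
  sum_congr rfl fun _ _ => abs_sub_comm _ _

lemma dist1_triangle (a b c : S → ℝ) : dist1 a c ≤ dist1 a b + dist1 b c := by
  rw [dist1, dist1, dist1, ← sum_add_distrib]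
  exact sum_le_sum fun x _ => abs_sub_le _ _ _

lemma dist1_mulVec (A : Matrix S S ℝ) (p p' : S → ℝ) :
    dist1 (A *ᵥ p) (A *ᵥ p') = ∑ z, |(A *ᵥ (p - p')) z| := by
  simp [dist1, Matrix.mulVec_sub]

lemma IsProbVec.sum_abs_sub_le {p p' : S → ℝ} (hp : IsProbVec p) (hp' : IsProbVec p') :
    ∑ x, |(p - p') x| ≤ 2 := by
  calc ∑ x, |(p - p') x| ≤ ∑ x, (p x + p' x) := sum_le_sum fun x _ => by
        rw [Pi.sub_apply]
        exact (abs_sub _ _).trans_eq (by rw [abs_of_nonneg (hp.1 x), abs_of_nonneg (hp'.1 x)])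
    _ = 2 := by rw [sum_add_distrib, hp.2, hp'.2]; norm_num

variable [DecidableEq S]

lemma IsStochastic.one : IsStochastic (1 : Matrix S S ℝ) :=
  ⟨fun y x => by by_cases h : y = x <;> simp [Matrix.one_apply, h],
    fun x => by simp [Matrix.one_apply]⟩

lemma prodG_self (G : ℕ → Matrix S S ℝ) (t : ℕ) : prodG G t t = 1 := by
  simp [prodG]

lemma prodG_succ (G : ℕ → Matrix S S ℝ) {t t₀ : ℕ} (h : t₀ ≤ t) :
    prodG G (t + 1) t₀ = G t * prodG G t t₀ := by
  unfold prodG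
  rw [show t + 1 - t₀ = (t - t₀) + 1 by omega, List.range_succ]
  simp [Nat.add_sub_cancel' h]

lemma prodG_mul_prodG (G : ℕ → Matrix S S ℝ) {t s t₀ : ℕ} (h₀ : t₀ ≤ s) (h₁ : s ≤ t) :
    prodG G t s * prodG G s t₀ = prodG G t t₀ := by
  induction t, h₁ using Nat.le_induction with
  | base => rw [prodG_self, Matrix.one_mul]
  | succ t hst ih => rw [prodG_succ G hst, prodG_succ G (h₀.trans hst), mul_assoc, ih]

lemma prodG_mulVec_prodG_mulVec (G : ℕ → Matrix S S ℝ) {t s t₀ : ℕ} (h₀ : t₀ ≤ s)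
    (h₁ : s ≤ t) (v : S → ℝ) : prodG G t s *ᵥ (prodG G s t₀ *ᵥ v) = prodG G t t₀ *ᵥ v := by
  rw [Matrix.mulVec_mulVec, prodG_mul_prodG G h₀ h₁]

lemma IsStochastic.prodG {G : ℕ → Matrix S S ℝ} (hG : ∀ t, IsStochastic (G t)) {t t₀ : ℕ}
    (h : t₀ ≤ t) : IsStochastic (prodG G t t₀) := by
  induction t, h using Nat.le_induction with
  | base => rw [prodG_self]; exact .one
  | succ t ht ih => rw [prodG_succ G ht]; exact (hG t).mul ih

end StochasticMatrix

section Ergodicity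

variable [Fintype S] [DecidableEq S] {G : ℕ → Matrix S S ℝ}

lemma sum_abs_prodG_mulVec_le_exp (hG : ∀ t, IsStochastic (G t)) {R s₀ : ℕ} {z₀ : S}
    {c : ℕ → ℝ}
    (hanchor : ∀ k x, c (s₀ + k * R) ≤ prodG G (s₀ + k * R + R) (s₀ + k * R) z₀ x)
    (n : ℕ) {w : S → ℝ} (hw : ∑ x, w x = 0) :
    ∑ z, |(prodG G (s₀ + n * R) s₀ *ᵥ w) z| ≤
      Real.exp (-∑ k ∈ range n, c (s₀ + k * R)) * ∑ x, |w x| := by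
  induction n with
  | zero => simp [prodG_self]
  | succ n ih =>
    set s := s₀ + n * R
    have hs : s₀ ≤ s := Nat.le_add_right _ _
    have hblock : IsStochastic (prodG G (s + R) s) := .prodG hG (Nat.le_add_right _ _)
    have hc : c s ≤ 1 := (hanchor n z₀).trans (hblock.apply_le_one _ _)
    have hw' : ∑ x, (prodG G s s₀ *ᵥ w) x = 0 := by rw [(IsStochastic.prodG hG hs).sum_mulVec, hw]
    rw [show s₀ + (n + 1) * R = s + R by ring,
      ← prodG_mulVec_prodG_mulVec G hs (Nat.le_add_right _ _)]
    calc _ ≤ (1 - c s) * ∑ x, |(prodG G s s₀ *ᵥ w) x| :=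
          hblock.sum_abs_mulVec_le_of_row (hanchor n) hw'
      _ ≤ Real.exp (-c s) * (Real.exp (-∑ k ∈ range n, c (s₀ + k * R)) * ∑ x, |w x|) :=
          mul_le_mul (by linarith [Real.add_one_le_exp (-c s)]) ih
            (sum_nonneg fun _ _ => abs_nonneg _) (Real.exp_pos _).le
      _ = _ := by rw [sum_range_succ, neg_add, Real.exp_add]; ring

theorem weaklyErgodic_of_anchor (hG : ∀ t, IsStochastic (G t)) {R T : ℕ} {z₀ : S}
    {c : ℕ → ℝ} (hanchor : ∀ s, T ≤ s → ∀ x, c s ≤ prodG G (s + R) s z₀ x)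
    (hdiv : ∀ s₀, Tendsto (fun n => ∑ k ∈ range n, c (s₀ + k * R)) atTop atTop) :
    WeaklyErgodic G := by
  intro t₀ ε hε
  set s₀ := max t₀ T
  obtain ⟨n, hn⟩ := ((hdiv s₀).eventually_ge_atTop (Real.log (2 / ε))).exists
  refine ⟨s₀ + n * R, fun t ht p p' hp hp' => ?_⟩
  have h₀ : t₀ ≤ s₀ := le_max_left _ _
  have h₁ : s₀ ≤ s₀ + n * R := Nat.le_add_right _ _
  set w := prodG G s₀ t₀ *ᵥ (p - p')
  have hw : ∑ x, w x = 0 := by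
    rw [(IsStochastic.prodG hG h₀).sum_mulVec]
    simp [sum_sub_distrib, hp.2, hp'.2]
  have hexp : Real.exp (-∑ k ∈ range n, c (s₀ + k * R)) ≤ ε / 2 := by
    calc _ ≤ Real.exp (-Real.log (2 / ε)) := Real.exp_le_exp.2 (neg_le_neg hn)
      _ = ε / 2 := by rw [Real.exp_neg, Real.exp_log (by positivity), inv_div]
  rw [dist1_mulVec, ← prodG_mulVec_prodG_mulVec G (h₀.trans h₁) ht,
    ← prodG_mulVec_prodG_mulVec G h₀ h₁]
  calc _ ≤ ∑ z, |(prodG G (s₀ + n * R) s₀ *ᵥ w) z| :=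
        (IsStochastic.prodG hG ht).sum_abs_mulVec_le _
    _ ≤ Real.exp (-∑ k ∈ range n, c (s₀ + k * R)) * ∑ x, |w x| :=
        sum_abs_prodG_mulVec_le_exp hG
          (fun k => hanchor _ ((le_max_right _ _).trans (Nat.le_add_right _ _))) n hw
    _ ≤ ε / 2 * 2 :=
        mul_le_mul hexp (((IsStochastic.prodG hG h₀).sum_abs_mulVec_le _).trans
          (hp.sum_abs_sub_le hp')) (sum_nonneg fun _ _ => abs_nonneg _) (by positivity)
    _ = ε := by ring

lemma dist1_prodG_mulVec_le_sum (hG : ∀ t, IsStochastic (G t)) {q : ℕ → S → ℝ}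
    (hstat : ∀ t, G t *ᵥ q t = q t) {s t : ℕ} (hst : s ≤ t) :
    dist1 (prodG G t s *ᵥ q s) (q t) ≤ ∑ k ∈ Ico s t, dist1 (q (k + 1)) (q k) := by
  induction t, hst using Nat.le_induction with
  | base => simp [prodG_self, dist1]
  | succ t hst ih =>
    rw [prodG_succ G hst, ← Matrix.mulVec_mulVec, sum_Ico_succ_top hst]
    calc _ ≤ dist1 (G t *ᵥ (prodG G t s *ᵥ q s)) (G t *ᵥ q t) + dist1 (G t *ᵥ q t) (q (t + 1)) :=
          dist1_triangle _ _ _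
      _ ≤ _ := by
          gcongr
          · rw [dist1_mulVec]
            exact ((hG t).sum_abs_mulVec_le _).trans ih
          · rw [hstat, dist1_comm]

theorem stronglyErgodicTo_of_weaklyErgodic (hG : ∀ t, IsStochastic (G t))
    (hWE : WeaklyErgodic G) {q : ℕ → S → ℝ} (hq : ∀ t, IsProbVec (q t))
    (hstat : ∀ t, G t *ᵥ q t = q t) (hvar : Summable fun k => dist1 (q (k + 1)) (q k))
    {r : S → ℝ} (hqr : Tendsto (fun t => dist1 (q t) r) atTop (𝓝 0)) :
    StronglyErgodicTo G r := by
  intro t₀ ε hε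
  set V := fun k => dist1 (q (k + 1)) (q k)
  have hV : ∀ k, 0 ≤ V k := fun k => sum_nonneg fun _ _ => abs_nonneg _
  obtain ⟨s, hs, ht₀⟩ := (((tendsto_sum_nat_add V).eventually_lt_const (by positivity :
    (0 : ℝ) < ε / 3)).and (eventually_ge_atTop t₀)).exists
  have htail : ∀ t, s ≤ t → ∑ k ∈ Ico s t, V k ≤ ε / 3 := fun t _ => by
    rw [sum_Ico_eq_sum_range]
    refine le_trans ?_ hs.le
    simpa only [add_comm s] using
      ((summable_nat_add_iff s).2 hvar).sum_le_tsum _ fun k _ => hV (k + s)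
  obtain ⟨T, hT⟩ := hWE s (ε / 3) (by positivity)
  refine eventually_atTop.1 ((((eventually_ge_atTop T).and
    (hqr.eventually_lt_const (by positivity : (0 : ℝ) < ε / 3))).and
    (eventually_ge_atTop s)).mono fun t ⟨⟨hTt, hqt⟩, hst⟩ p hp => ?_)
  rw [← prodG_mulVec_prodG_mulVec G ht₀ hst]
  calc _ ≤ dist1 (prodG G t s *ᵥ (prodG G s t₀ *ᵥ p)) (prodG G t s *ᵥ q s) +
        (dist1 (prodG G t s *ᵥ q s) (q t) + dist1 (q t) r) :=
        (dist1_triangle _ _ _).trans (add_le_add le_rfl (dist1_triangle _ _ _))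
    _ ≤ ε / 3 + (ε / 3 + ε / 3) := by
        gcongr
        · exact hT t hTt _ _ ((IsStochastic.prodG hG ht₀).isProbVec_mulVec hp) (hq s)
        · exact (dist1_prodG_mulVec_le_sum hG hstat hst).trans (htail t hst)
    _ = ε := by ring

end Ergodicity

lemma summable_abs_sub_succ_of_monotoneOn {f : ℕ → ℝ} {T : ℕ} {C : ℝ}
    (hf : MonotoneOn f (Set.Ici T)) (hC : ∀ n, f n ≤ C) :
    Summable fun k => |f (k + 1) - f k| := by
  refine (summable_nat_add_iff T).1
    (summable_of_sum_range_le (c := C - f T) (fun _ => abs_nonneg _) fun n => ?_)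
  have hstep : ∀ k, |f (k + T + 1) - f (k + T)| = f (k + 1 + T) - f (k + T) := fun k => by
    rw [add_right_comm, abs_of_nonneg (sub_nonneg.2 (hf (by simp) (by simp) (by omega)))]
  simp only [hstep, sum_range_sub (fun k => f (k + T))]
  linarith [hC (n + T), hf (by simp : T ∈ Set.Ici T) (by simp) (by omega : T ≤ 0 + T)]

lemma summable_abs_sub_succ_of_antitoneOn {f : ℕ → ℝ} {T : ℕ} {C : ℝ}
    (hf : AntitoneOn f (Set.Ici T)) (hC : ∀ n, C ≤ f n) :
    Summable fun k => |f (k + 1) - f k| :=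
  (summable_abs_sub_succ_of_monotoneOn (f := -f) hf.neg fun n => neg_le_neg (hC n)).congr
    fun k => by rw [Pi.neg_apply, Pi.neg_apply, neg_sub_neg, abs_sub_comm]

lemma tendsto_sum_range_div_atTop {C a : ℝ} (hC : 0 < C) (ha : 0 < a) (s₀ R : ℕ) :
    Tendsto (fun n => ∑ k ∈ range n, C / (((s₀ + k * R : ℕ) : ℝ) + a)) atTop atTop := by
  have hb : 0 < (s₀ : ℝ) + R + a := by positivity
  refine tendsto_atTop_mono (fun n => ?_)
    (Real.tendsto_sum_range_one_div_nat_succ_atTop.const_mul_atTop (div_pos hC hb))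
  rw [mul_sum]
  refine sum_le_sum fun k _ => ?_
  rw [div_mul_div_comm, mul_one]
  refine div_le_div_of_nonneg_left hC.le (by positivity) ?_
  push_cast
  nlinarith [(k.cast_nonneg : (0 : ℝ) ≤ k), (R.cast_nonneg : (0 : ℝ) ≤ R),
    (s₀.cast_nonneg : (0 : ℝ) ≤ s₀)]

section Boltzmann

variable [Fintype S] (F0 F1 : S → ℝ)

/-- `qB F0 F1 1 T1 t` as a function of the coupling `γ = 1 / T1 t`. -/
noncomputable def boltzmann (γ : ℝ) (x : S) : ℝ :=
  Real.exp (-F0 x - γ * F1 x) / ∑ y, Real.exp (-F0 y - γ * F1 y)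

noncomputable def boltzmannMean (γ : ℝ) : ℝ :=
  ∑ x, F1 x * boltzmann F0 F1 γ x

lemma qB_eq_boltzmann (γ : ℕ → ℝ) (t : ℕ) :
    qB F0 F1 1 (fun t => 1 / γ t) t = boltzmann F0 F1 (γ t) := by
  ext x
  simp [qB, Zfun, boltzmann, div_eq_mul_inv, mul_comm]

variable [Nonempty S]

lemma sum_exp_pos (γ : ℝ) : 0 < ∑ y, Real.exp (-F0 y - γ * F1 y) :=
  sum_pos (fun _ _ => Real.exp_pos _) univ_nonempty

lemma boltzmann_pos (γ : ℝ) (x : S) : 0 < boltzmann F0 F1 γ x :=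
  div_pos (Real.exp_pos _) (sum_exp_pos F0 F1 γ)

lemma sum_boltzmann (γ : ℝ) : ∑ x, boltzmann F0 F1 γ x = 1 := by
  simp only [boltzmann, ← sum_div]
  exact div_self (sum_exp_pos F0 F1 γ).ne'

lemma isProbVec_boltzmann (γ : ℝ) : IsProbVec (boltzmann F0 F1 γ) :=
  ⟨fun x => (boltzmann_pos F0 F1 γ x).le, sum_boltzmann F0 F1 γ⟩

lemma boltzmann_le_one (γ : ℝ) (x : S) : boltzmann F0 F1 γ x ≤ 1 :=
  (single_le_sum (fun y _ => (boltzmann_pos F0 F1 γ y).le) (mem_univ x)).trans_eq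
    (sum_boltzmann F0 F1 γ)

lemma boltzmann_div_boltzmann (γ : ℝ) (y x : S) :
    boltzmann F0 F1 γ y / boltzmann F0 F1 γ x = Real.exp ((F0 x - F0 y) + γ * (F1 x - F1 y)) := by
  rw [boltzmann, boltzmann, div_div_div_cancel_right₀ (sum_exp_pos F0 F1 γ).ne', ← Real.exp_sub]
  ring_nf

end Boltzmann

section BoltzmannLimit

variable [Fintype S] [Nonempty S] (F0 F1 : S → ℝ)

lemma le_boltzmannMean (γ : ℝ) {x : S} (hx : ∀ y, F1 x ≤ F1 y) :
    F1 x ≤ boltzmannMean F0 F1 γ :=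
  calc F1 x = ∑ y, F1 x * boltzmann F0 F1 γ y := by rw [← mul_sum, sum_boltzmann, mul_one]
    _ ≤ boltzmannMean F0 F1 γ :=
        sum_le_sum fun y _ => mul_le_mul_of_nonneg_right (hx y) (boltzmann_pos F0 F1 γ y).le

lemma hasDerivAt_boltzmann (γ : ℝ) (x : S) :
    HasDerivAt (fun γ => boltzmann F0 F1 γ x)
      (boltzmann F0 F1 γ x * (boltzmannMean F0 F1 γ - F1 x)) γ := by
  have hexp : ∀ y, HasDerivAt (fun γ => Real.exp (-F0 y - γ * F1 y))
      (Real.exp (-F0 y - γ * F1 y) * -F1 y) γ := fun y =>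
    (((hasDerivAt_id γ).mul_const (F1 y)).const_sub (-F0 y)).exp.congr_deriv (by simp)
  have hZ := sum_exp_pos F0 F1 γ
  refine ((hexp x).fun_div (HasDerivAt.fun_sum fun y _ => hexp y) hZ.ne').congr_deriv ?_
  simp only [boltzmannMean, boltzmann, mul_div_assoc', ← sum_div, mul_neg, sum_neg_distrib]
  field_simp
  ring

lemma tendsto_boltzmann (x : S) :
    Tendsto (fun γ => boltzmann F0 F1 γ x) atTop (𝓝 (rLimit F0 F1 1 x)) := by
  set m := univ.inf' univ_nonempty F1
  have hmin : ∀ y, (∀ z, F1 y ≤ F1 z) ↔ F1 y = m := fun y =>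
    ⟨fun h => le_antisymm (le_inf' _ _ fun z _ => h z) (inf'_le _ (mem_univ y)),
      fun h z => h ▸ inf'_le _ (mem_univ z)⟩
  set w : S → ℝ := fun y => if ∀ z, F1 y ≤ F1 z then Real.exp (-F0 y) else 0
  -- after dividing numerator and denominator by `exp (-γ m)`, every weight converges
  have hw : ∀ y, Tendsto (fun γ : ℝ => Real.exp (-F0 y - γ * (F1 y - m))) atTop (𝓝 (w y)) := by
    intro y
    by_cases hy : ∀ z, F1 y ≤ F1 z
    · simp only [w, if_pos hy, (hmin y).1 hy, sub_self, mul_zero, sub_zero]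
      exact tendsto_const_nhds
    · have hpos : 0 < F1 y - m :=
        sub_pos.2 ((inf'_le _ (mem_univ y)).lt_of_ne fun h => hy ((hmin y).2 h.symm))
      simp only [w, if_neg hy]
      refine Real.tendsto_exp_atBot.comp (tendsto_atBot_add_const_left _ (-F0 y)
        (tendsto_neg_atTop_atBot.comp (tendsto_id.atTop_mul_const hpos))) |>.congr fun γ => ?_
      simp [sub_eq_add_neg]
  have hZ : 0 < ∑ y, w y := by
    obtain ⟨y, -, hy⟩ := exists_min_image univ F1 univ_nonempty
    exact sum_pos' (fun z _ => by simp only [w]; split <;> positivity)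
      ⟨y, mem_univ y, by simp only [w, if_pos fun z => hy z (mem_univ z), Real.exp_pos]⟩
  have hshift : ∀ γ : ℝ, boltzmann F0 F1 γ x =
      Real.exp (-F0 x - γ * (F1 x - m)) / ∑ y, Real.exp (-F0 y - γ * (F1 y - m)) := fun γ => by
    have h : ∀ y, Real.exp (-F0 y - γ * (F1 y - m)) =
        Real.exp (-F0 y - γ * F1 y) * Real.exp (γ * m) := fun y => by
      rw [← Real.exp_add]; ring_nf
    simp only [h, ← sum_mul, boltzmann, mul_div_mul_right _ _ (Real.exp_pos _).ne']
  have hr : rLimit F0 F1 1 x = w x / ∑ y, w y := by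
    simp only [rLimit, w, sum_filter, div_one]
    split_ifs <;> simp
  rw [hr]
  simp only [hshift]
  exact (hw x).div (tendsto_finsetSum _ fun y _ => hw y) hZ.ne'

lemma sum_rLimit : ∑ x, rLimit F0 F1 1 x = 1 :=
  tendsto_nhds_unique (tendsto_finsetSum _ fun x _ => tendsto_boltzmann F0 F1 x)
    (by simp only [sum_boltzmann]; exact tendsto_const_nhds)

lemma tendsto_boltzmannMean :
    Tendsto (boltzmannMean F0 F1) atTop (𝓝 (univ.inf' univ_nonempty F1)) := by
  have h : ∀ x, F1 x * rLimit F0 F1 1 x = univ.inf' univ_nonempty F1 * rLimit F0 F1 1 x := by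
    intro x
    by_cases hx : ∀ y, F1 x ≤ F1 y
    · rw [le_antisymm (le_inf' _ _ fun y _ => hx y) (inf'_le _ (mem_univ x))]
    · simp [rLimit, hx]
  have hlim := tendsto_finsetSum univ fun x _ => (tendsto_boltzmann F0 F1 x).const_mul (F1 x)
  rwa [sum_congr rfl fun x _ => h x, ← mul_sum, sum_rLimit, mul_one] at hlim

/-- The derivative `boltzmann * (boltzmannMean - F1 x)` is nonnegative at the minima of `F1`,
and eventually nonpositive elsewhere because the mean tends to `min F1`. -/
lemma exists_monotoneOn_or_antitoneOn_boltzmann (x : S) :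
    ∃ γ₀, MonotoneOn (fun γ => boltzmann F0 F1 γ x) (Set.Ici γ₀) ∨
      AntitoneOn (fun γ => boltzmann F0 F1 γ x) (Set.Ici γ₀) := by
  have hd : Differentiable ℝ fun γ => boltzmann F0 F1 γ x :=
    fun γ => (hasDerivAt_boltzmann F0 F1 γ x).differentiableAt
  by_cases hx : ∀ y, F1 x ≤ F1 y
  · refine ⟨0, Or.inl ((monotone_of_deriv_nonneg hd fun γ => ?_).monotoneOn _)⟩
    rw [(hasDerivAt_boltzmann F0 F1 γ x).deriv]
    exact mul_nonneg (boltzmann_pos F0 F1 γ x).le (sub_nonneg.2 (le_boltzmannMean F0 F1 γ hx))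
  · push Not at hx
    obtain ⟨y, hy⟩ := hx
    obtain ⟨γ₀, hγ₀⟩ := eventually_atTop.1 ((tendsto_boltzmannMean F0 F1).eventually_lt_const
      ((inf'_le _ (mem_univ y)).trans_lt hy))
    refine ⟨γ₀, Or.inr (antitoneOn_of_deriv_nonpos (convex_Ici γ₀) hd.continuous.continuousOn
      hd.differentiableOn fun γ hγ => ?_)⟩
    rw [interior_Ici] at hγ
    rw [(hasDerivAt_boltzmann F0 F1 γ x).deriv]
    exact mul_nonpos_of_nonneg_of_nonpos (boltzmann_pos F0 F1 γ x).le
      (sub_nonpos.2 (hγ₀ γ (le_of_lt hγ)).le)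

theorem summable_dist1_boltzmann {γ : ℕ → ℝ} (hmono : Monotone γ)
    (htop : Tendsto γ atTop atTop) :
    Summable fun k => dist1 (boltzmann F0 F1 (γ (k + 1))) (boltzmann F0 F1 (γ k)) := by
  unfold dist1
  refine summable_sum fun x _ => ?_
  obtain ⟨γ₀, h⟩ := exists_monotoneOn_or_antitoneOn_boltzmann F0 F1 x
  obtain ⟨T, hT⟩ := (htop.eventually_ge_atTop γ₀).exists
  have hmem : ∀ n ∈ Set.Ici T, γ n ∈ Set.Ici γ₀ := fun n hn => hT.trans (hmono hn)
  rcases h with h | h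
  · exact summable_abs_sub_succ_of_monotoneOn (f := fun n => boltzmann F0 F1 (γ n) x)
      (fun a ha b hb hab => h (hmem a ha) (hmem b hb) (hmono hab))
      fun n => boltzmann_le_one F0 F1 (γ n) x
  · exact summable_abs_sub_succ_of_antitoneOn (f := fun n => boltzmann F0 F1 (γ n) x)
      (fun a ha b hb hab => h (hmem a ha) (hmem b hb) (hmono hab))
      fun n => (boltzmann_pos F0 F1 (γ n) x).le

lemma tendsto_dist1_boltzmann_rLimit {γ : ℕ → ℝ} (htop : Tendsto γ atTop atTop) :
    Tendsto (fun t => dist1 (boltzmann F0 F1 (γ t)) (rLimit F0 F1 1)) atTop (𝓝 0) := by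
  simpa [dist1] using tendsto_finsetSum univ fun x _ =>
    (((tendsto_boltzmann F0 F1 x).comp htop).sub_const (rLimit F0 F1 1 x)).abs

end BoltzmannLimit

namespace IsAcceptFn

variable {g : ℝ → ℝ} (hg : IsAcceptFn g)
include hg

lemma apply_eq_mul {u : ℝ} (hu : 0 < u) : g u = g (1 / u) * u := by
  have h := hg.ratio _ (one_div_pos.2 hu)
  rw [one_div_one_div] at h
  rw [h, div_div_eq_mul_div, div_one]

lemma apply_div_mul_eq {a b : ℝ} (ha : 0 < a) (hb : 0 < b) : g (a / b) * b = g (b / a) * a := by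
  rw [hg.apply_eq_mul (div_pos ha hb), one_div_div, mul_assoc, div_mul_cancel₀ _ hb.ne']

lemma apply_le_self {u : ℝ} (hu : 0 < u) : g u ≤ u := by
  rw [hg.apply_eq_mul hu]
  exact mul_le_of_le_one_left hu.le (hg.maps _ (one_div_pos.2 hu).le).2

lemma mul_min_le_apply {u : ℝ} (hu : 0 < u) : g 1 * min 1 u ≤ g u := by
  rcases le_total 1 u with h | h
  · rw [min_eq_left h, mul_one]
    exact hg.mono (Set.mem_Ici.2 zero_le_one) (Set.mem_Ici.2 hu.le) h
  · rw [min_eq_right h, hg.apply_eq_mul hu]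
    exact mul_le_mul_of_nonneg_right
      (hg.mono (Set.mem_Ici.2 zero_le_one) (Set.mem_Ici.2 (one_div_pos.2 hu).le)
        (one_le_one_div hu h)) hu.le

end IsAcceptFn

section Metropolis

variable [Fintype S] [DecidableEq S] {P : S → S → ℝ} (hP : IsGenProb P) {A : ℕ → S → S → ℝ}
  {t : ℕ}
include hP

lemma GmatOf_apply (y x : S) :
    GmatOf P A t y x = P y x * A t y x + if y = x then 1 - ∑ z, P z x * A t z x else 0 := by
  by_cases h : y = x
  · subst h; simp [GmatOf, hP.diag_zero]
  · simp [GmatOf, h]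

lemma sum_mul_le_one_sub (hA : ∀ y x, A t y x ∈ Set.Icc 0 1) (x y : S) :
    ∑ z, P z x * A t z x ≤ 1 - P y x * (1 - A t y x) := by
  rw [← add_sum_erase _ _ (mem_univ y)]
  have h : ∑ z ∈ univ.erase y, P z x * A t z x ≤ ∑ z ∈ univ.erase y, P z x :=
    sum_le_sum fun z _ => mul_le_of_le_one_right (hP.nonneg x z) (hA z x).2
  have hP1 := add_sum_erase _ (fun z => P z x) (mem_univ y)
  rw [hP.sum_one] at hP1
  linarith

lemma isStochastic_GmatOf (hA : ∀ y x, A t y x ∈ Set.Icc 0 1) : IsStochastic (GmatOf P A t) := by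
  refine ⟨fun y x => ?_, fun x => ?_⟩
  · rw [GmatOf_apply hP]
    split_ifs with h
    · subst h
      have := sum_mul_le_one_sub hP hA y y
      rw [hP.diag_zero, zero_mul] at this ⊢
      linarith
    · simpa using mul_nonneg (hP.nonneg x y) (hA y x).1
  · simp [GmatOf_apply hP, sum_add_distrib]

lemma GmatOf_mulVec_eq_self {q : S → ℝ}
    (hbal : ∀ y x, P y x * A t y x * q x = P x y * A t x y * q y) :
    GmatOf P A t *ᵥ q = q := by
  ext y
  simp only [Matrix.mulVec, dotProduct, GmatOf_apply hP, add_mul, sum_add_distrib, hbal y,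
    ite_mul, zero_mul, sum_ite_eq, mem_univ, if_true, ← sum_mul]
  ring

lemma GmatOf_apply_self_ge (hA : ∀ y x, A t y x ∈ Set.Icc 0 1) (x y : S) :
    P y x * (1 - A t y x) ≤ GmatOf P A t x x := by
  rw [GmatOf_apply hP, hP.diag_zero, zero_mul, zero_add, if_pos rfl]
  linarith [sum_mul_le_one_sub hP hA x y]

end Metropolis

section Paths

variable [Fintype S] [DecidableEq S] {G : ℕ → Matrix S S ℝ}

lemma pow_le_prodG_apply_of_path (hG : ∀ t, IsStochastic (G t)) (s : ℕ) {f : ℕ → S} {κ : ℝ}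
    (hκ : 0 ≤ κ) (n : ℕ) (hstep : ∀ j < n, κ ≤ G (s + j) (f (j + 1)) (f j)) :
    κ ^ n ≤ prodG G (s + n) s (f n) (f 0) := by
  induction n with
  | zero => simp [prodG_self]
  | succ n ih =>
    have hs : s ≤ s + n := Nat.le_add_right _ _
    rw [← add_assoc, prodG_succ G hs, Matrix.mul_apply, pow_succ']
    calc κ * κ ^ n ≤ G (s + n) (f (n + 1)) (f n) * prodG G (s + n) s (f n) (f 0) :=
          mul_le_mul (hstep n n.lt_succ_self) (ih fun j hj => hstep j (by omega))
            (pow_nonneg hκ n) ((hG _).1 _ _)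
      _ ≤ _ := single_le_sum (f := fun z => G (s + n) (f (n + 1)) z * prodG G (s + n) s z (f 0))
          (fun z _ => mul_nonneg ((hG _).1 _ _) ((IsStochastic.prodG hG hs).1 _ _)) (mem_univ _)

/-- A path of length `d ≤ R` from `x` to `z₀`, padded by waiting at `z₀`. -/
lemma pow_le_prodG_apply_of_reachIn (hG : ∀ t, IsStochastic (G t)) {P : S → S → ℝ} {s d R : ℕ}
    {x z₀ : S} (hreach : ReachIn P d x z₀) (hdR : d ≤ R) {κ : ℝ} (hκ : 0 ≤ κ)
    (hedge : ∀ j < R, ∀ a b, 0 < P b a → κ ≤ G (s + j) b a)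
    (hstay : ∀ j < R, κ ≤ G (s + j) z₀ z₀) :
    κ ^ R ≤ prodG G (s + R) s z₀ x := by
  obtain ⟨p, hp0, hpd, hp⟩ := hreach
  have h := pow_le_prodG_apply_of_path hG s (f := fun j => p (min j d)) hκ R fun j hj => by
    rcases lt_or_ge j d with hjd | hjd
    · rw [min_eq_left hjd.le, min_eq_left hjd]
      exact hedge j hj _ _ (hp j hjd)
    · rw [min_eq_right hjd, min_eq_right (by omega), hpd]
      exact hstay j hj
  simpa [min_eq_right hdR, hpd, hp0] using h

end Paths

section GenerationProbability

variable [Fintype S] {P : S → S → ℝ}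

lemma ReachIn.symm (hP : IsGenProb P) {n : ℕ} {x y : S} (h : ReachIn P n x y) :
    ReachIn P n y x := by
  obtain ⟨f, hf0, hfn, hstep⟩ := h
  refine ⟨fun k => f (n - k), by simp [hfn], by simp [hf0], fun k hk => ?_⟩
  rw [hP.symm]
  simpa [show n - k = n - (k + 1) + 1 by omega] using hstep (n - (k + 1)) (by omega)

lemma reachIn_dSteps (hP : IsGenProb P) (x y : S) : ReachIn P (dSteps P x y) x y := by
  obtain ⟨n, -, f, hf⟩ := hP.irreducible x y
  exact Nat.sInf_mem (s := {n | ReachIn P n x y}) ⟨n, f, hf⟩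

lemma finite_setOf_pos_entries : {v | ∃ x y : S, 0 < P y x ∧ v = P y x}.Finite :=
  (Set.finite_range fun p : S × S => P p.2 p.1).subset
    (by rintro _ ⟨x, y, -, rfl⟩; exact ⟨(x, y), rfl⟩)

lemma wmin_le {x y : S} (h : 0 < P y x) : wmin P ≤ P y x :=
  csInf_le finite_setOf_pos_entries.bddBelow ⟨x, y, h, rfl⟩

lemma wmin_pos [Nonempty S] (hP : IsGenProb P) : 0 < wmin P := by
  obtain ⟨x⟩ := ‹Nonempty S›
  obtain ⟨y, -, hy⟩ := exists_lt_of_sum_lt (s := univ) (f := fun _ => (0 : ℝ))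
    (g := fun y => P y x) (by simp [hP.sum_one])
  obtain ⟨x', y', h, hw⟩ := Set.Nonempty.csInf_mem (s := {v | ∃ x y : S, 0 < P y x ∧ v = P y x})
    ⟨_, x, y, hy, rfl⟩ finite_setOf_pos_entries
  rw [wmin, hw]
  exact h

lemma abs_sub_le_Lmax (F : S → ℝ) {x y : S} (h : 0 < P y x) : |F x - F y| ≤ Lmax P F :=
  le_csSup ((Set.finite_range fun p : S × S => |F p.1 - F p.2|).subset
    (by rintro _ ⟨x, y, -, rfl⟩; exact ⟨(x, y), rfl⟩)).bddAbove ⟨x, y, h, rfl⟩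

lemma Lmax_nonneg (F : S → ℝ) : 0 ≤ Lmax P F :=
  Real.sSup_nonneg (by rintro _ ⟨x, y, -, rfl⟩; exact abs_nonneg _)

lemma exists_eq_Rnum (F : S → ℝ) (hne : ∃ x, x ∉ Sm P F) :
    ∃ x, x ∉ Sm P F ∧ Rnum P F = univ.sup fun y => dSteps P x y := by
  obtain ⟨x, hx⟩ := hne
  exact Nat.sInf_mem (s := {r | ∃ x, x ∉ Sm P F ∧ r = univ.sup fun y => dSteps P x y})
    ⟨_, x, hx, rfl⟩

lemma Rnum_pos (hP : IsGenProb P) (F : S → ℝ) (hne : ∃ x, x ∉ Sm P F) :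
    0 < Rnum P F := by
  obtain ⟨x, hx, hR⟩ := exists_eq_Rnum F hne
  obtain ⟨y, hyx, hF⟩ : ∃ y, 0 < P y x ∧ F x < F y := by simpa [Sm] using hx
  have hd : dSteps P x y ≠ 0 := fun h => by
    obtain ⟨f, hf0, hfd, -⟩ := reachIn_dSteps hP x y
    rw [h, hf0] at hfd
    exact hF.ne (hfd ▸ rfl)
  exact hR ▸ (Nat.pos_of_ne_zero hd).trans_le (le_sup (f := fun y => dSteps P x y) (mem_univ y))

end GenerationProbability

section Annealing

variable [Fintype S]

/-- The acceptance probability `A(y, x; t)`, with `q(·; t) = boltzmann F0 F1 (γ t)`. -/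
noncomputable def annealAccept (g : ℝ → ℝ) (F0 F1 : S → ℝ) (γ : ℕ → ℝ) (t : ℕ) (y x : S) : ℝ :=
  g (boltzmann F0 F1 (γ t) y / boltzmann F0 F1 (γ t) x)

variable [DecidableEq S]

lemma Gpimc_eq_GmatOf (P : S → S → ℝ) (g : ℝ → ℝ) (F0 F1 : S → ℝ) (γ : ℕ → ℝ) :
    Gpimc P g F0 F1 1 (fun t => 1 / γ t) = GmatOf P (annealAccept g F0 F1 γ) := by
  simp only [Gpimc, qB_eq_boltzmann]
  rfl

variable [Nonempty S] {P : S → S → ℝ} (hP : IsGenProb P) {g : ℝ → ℝ} (hg : IsAcceptFn g)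
  (F0 F1 : S → ℝ) (γ : ℕ → ℝ)
include hP hg

omit hP [DecidableEq S] in
lemma annealAccept_mem_Icc (t : ℕ) (y x : S) : annealAccept g F0 F1 γ t y x ∈ Set.Icc 0 1 :=
  hg.maps _ (div_pos (boltzmann_pos F0 F1 _ y) (boltzmann_pos F0 F1 _ x)).le

lemma isStochastic_anneal (t : ℕ) : IsStochastic (GmatOf P (annealAccept g F0 F1 γ) t) :=
  isStochastic_GmatOf hP (annealAccept_mem_Icc hg F0 F1 γ t)

lemma anneal_mulVec_boltzmann (t : ℕ) :
    GmatOf P (annealAccept g F0 F1 γ) t *ᵥ boltzmann F0 F1 (γ t) = boltzmann F0 F1 (γ t) :=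
  GmatOf_mulVec_eq_self hP fun y x => by
    simp only [annealAccept, mul_assoc, hg.apply_div_mul_eq (boltzmann_pos F0 F1 _ y)
      (boltzmann_pos F0 F1 _ x), hP.symm x y]

lemma exists_edge_lower_bound (hg1 : 0 < g 1) (hγ : ∀ t, 0 ≤ γ t) :
    ∃ c > 0, ∀ t x y, 0 < P y x →
      c * Real.exp (-(γ t * Lmax P F1)) ≤ GmatOf P (annealAccept g F0 F1 γ) t y x := by
  obtain ⟨B, hB⟩ := (Set.finite_range fun p : S × S => F0 p.1 - F0 p.2).bddAbove
  have hB' : ∀ x y, F0 x - F0 y ≤ B := fun x y => hB ⟨(x, y), rfl⟩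
  refine ⟨wmin P * g 1 * Real.exp (-B), by have := wmin_pos hP; positivity, fun t x y hxy => ?_⟩
  have hyx : y ≠ x := by rintro rfl; exact hxy.ne' (hP.diag_zero y)
  have hu := div_pos (boltzmann_pos F0 F1 (γ t) y) (boltzmann_pos F0 F1 (γ t) x)
  have hF1 : -Lmax P F1 ≤ F1 x - F1 y := neg_le_of_abs_le (abs_sub_le_Lmax F1 hxy)
  have hlow : Real.exp (-B - γ t * Lmax P F1) ≤
      min 1 (boltzmann F0 F1 (γ t) y / boltzmann F0 F1 (γ t) x) := by
    have := mul_le_mul_of_nonneg_left hF1 (hγ t)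
    refine le_min (Real.exp_le_one_iff.2 ?_) ?_
    · nlinarith [hB' x x, Lmax_nonneg (P := P) F1, hγ t]
    · rw [boltzmann_div_boltzmann]
      exact Real.exp_le_exp.2 (by linarith [hB' y x])
  rw [GmatOf_apply hP, if_neg hyx, add_zero]
  calc _ = wmin P * (g 1 * Real.exp (-B - γ t * Lmax P F1)) := by
        rw [sub_eq_add_neg, Real.exp_add]; ring
    _ ≤ P y x * annealAccept g F0 F1 γ t y x :=
        mul_le_mul (wmin_le hxy) ((mul_le_mul_of_nonneg_left hlow hg1.le).trans
          (hg.mul_min_le_apply hu)) (by positivity) (hP.nonneg x y)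

lemma exists_stay_lower_bound {x : S} (hx : x ∉ Sm P F1) :
    ∃ c > 0, ∃ γ₁, ∀ t, γ₁ ≤ γ t → c ≤ GmatOf P (annealAccept g F0 F1 γ) t x x := by
  obtain ⟨y, hyx, hF⟩ : ∃ y, 0 < P y x ∧ F1 x < F1 y := by simpa [Sm] using hx
  obtain ⟨B, hB⟩ := (Set.finite_range fun p : S × S => F0 p.1 - F0 p.2).bddAbove
  refine ⟨wmin P / 2, by have := wmin_pos hP; positivity, (B + Real.log 2) / (F1 y - F1 x),
    fun t ht => ?_⟩
  -- at large coupling the uphill move `x → y` is accepted with probability at most `1 / 2`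
  have hacc : annealAccept g F0 F1 γ t y x ≤ 1 / 2 := by
    refine (hg.apply_le_self (div_pos (boltzmann_pos F0 F1 _ y) (boltzmann_pos F0 F1 _ x))).trans ?_
    rw [boltzmann_div_boltzmann]
    calc _ ≤ Real.exp (-Real.log 2) := Real.exp_le_exp.2 ?_
      _ = 1 / 2 := by rw [Real.exp_neg, Real.exp_log two_pos, one_div]
    have := (div_le_iff₀ (sub_pos.2 hF)).1 ht
    linarith [hB ⟨(x, y), rfl⟩]
  calc wmin P / 2 ≤ P y x * (1 - annealAccept g F0 F1 γ t y x) := by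
        nlinarith [wmin_le hyx, wmin_pos hP]
    _ ≤ _ := GmatOf_apply_self_ge hP (annealAccept_mem_Icc hg F0 F1 γ t) x y

end Annealing

section AnnealingErgodicity

variable [Fintype S] [DecidableEq S] [Nonempty S] {P : S → S → ℝ} (hP : IsGenProb P)
  {g : ℝ → ℝ} (hg : IsAcceptFn g) (F0 F1 : S → ℝ) {γ : ℕ → ℝ}
include hP hg

lemma exists_anchor (hg1 : 0 < g 1) (hne : ∃ x, x ∉ Sm P F1) (hγ0 : ∀ t, 0 ≤ γ t)
    (hmono : Monotone γ) (htop : Tendsto γ atTop atTop) :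
    ∃ z₀ : S, ∃ c > 0, ∃ T, ∀ s, T ≤ s → ∀ x,
      (c * Real.exp (-(γ (s + Rnum P F1) * Lmax P F1))) ^ Rnum P F1 ≤
        prodG (GmatOf P (annealAccept g F0 F1 γ)) (s + Rnum P F1) s z₀ x := by
  obtain ⟨z₀, hz₀, hR⟩ := exists_eq_Rnum F1 hne
  obtain ⟨c₁, hc₁, hedge⟩ := exists_edge_lower_bound hP hg F0 F1 γ hg1 hγ0
  obtain ⟨c₂, hc₂, γ₁, hstay⟩ := exists_stay_lower_bound hP hg F0 F1 γ hz₀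
  obtain ⟨T, hT⟩ := (htop.eventually_ge_atTop γ₁).exists
  refine ⟨z₀, min c₁ c₂, lt_min hc₁ hc₂, T, fun s hs x => ?_⟩
  set R := Rnum P F1
  have hL := Lmax_nonneg (P := P) F1
  have hexp : ∀ j ≤ R,
      Real.exp (-(γ (s + R) * Lmax P F1)) ≤ Real.exp (-(γ (s + j) * Lmax P F1)) := fun j hj =>
    Real.exp_le_exp.2 (neg_le_neg (mul_le_mul_of_nonneg_right (hmono (by omega)) hL))
  have hexp1 : Real.exp (-(γ (s + R) * Lmax P F1)) ≤ 1 :=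
    Real.exp_le_one_iff.2 (neg_nonpos.2 (mul_nonneg (hγ0 _) hL))
  refine pow_le_prodG_apply_of_reachIn (isStochastic_anneal hP hg F0 F1 γ)
    ((reachIn_dSteps hP z₀ x).symm hP)
    (hR ▸ le_sup (f := fun y => dSteps P z₀ y) (mem_univ x)) (by positivity)
    (fun j hj a b hab => ?_) (fun j hj => ?_)
  · calc _ ≤ c₁ * Real.exp (-(γ (s + j) * Lmax P F1)) :=
          mul_le_mul (min_le_left _ _) (hexp j hj.le) (Real.exp_pos _).le hc₁.le
      _ ≤ _ := hedge _ a b hab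
  · calc _ ≤ c₂ * 1 := mul_le_mul (min_le_right _ _) hexp1 (Real.exp_pos _).le hc₂.le
      _ ≤ _ := (mul_one c₂).trans_le (hstay _ (hT.trans (hmono (by omega))))

theorem stronglyErgodicTo_anneal (hg1 : 0 < g 1) (hne : ∃ x, x ∉ Sm P F1)
    (hγ0 : ∀ t, 0 ≤ γ t) (hmono : Monotone γ) (htop : Tendsto γ atTop atTop)
    (hbound : ∀ t : ℕ, 1 / ((t : ℝ) + 2) ≤ Real.exp (-((Rnum P F1 : ℝ) * Lmax P F1 * γ t))) :
    StronglyErgodicTo (Gpimc P g F0 F1 1 fun t => 1 / γ t) (rLimit F0 F1 1) := by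
  rw [Gpimc_eq_GmatOf]
  have hG := isStochastic_anneal hP hg F0 F1 γ
  obtain ⟨z₀, c, hc, T, hanchor⟩ := exists_anchor hP hg F0 F1 hg1 hne hγ0 hmono htop
  set R := Rnum P F1
  have hWE : WeaklyErgodic (GmatOf P (annealAccept g F0 F1 γ)) := by
    refine weaklyErgodic_of_anchor hG (R := R) (T := T) (z₀ := z₀)
      (c := fun s => c ^ R / ((s : ℝ) + R + 2))
      (fun s hs x => ?_) fun s₀ => ?_
    · calc c ^ R / ((s : ℝ) + R + 2) ≤ c ^ R * Real.exp (-(R * Lmax P F1 * γ (s + R))) := by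
            rw [div_eq_mul_one_div]
            gcongr
            exact_mod_cast hbound (s + R)
        _ = (c * Real.exp (-(γ (s + R) * Lmax P F1))) ^ R := by
            rw [mul_pow, ← Real.exp_nat_mul]
            ring_nf
        _ ≤ _ := hanchor s hs x
    · simpa only [add_assoc] using
        tendsto_sum_range_div_atTop (pow_pos hc R) (by positivity : (0 : ℝ) < R + 2) s₀ R
  exact stronglyErgodicTo_of_weaklyErgodic hG hWE (fun t => isProbVec_boltzmann F0 F1 (γ t))
    (anneal_mulVec_boltzmann hP hg F0 F1 γ) (summable_dist1_boltzmann F0 F1 hmono htop)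
    (tendsto_dist1_boltzmann_rLimit F0 F1 htop)

end AnnealingErgodicity

section TransverseFieldIsing

lemma tanh_le_tanh {u v : ℝ} (h : u ≤ v) : Real.tanh u ≤ Real.tanh v := by
  rwa [← Real.artanh_le_artanh_iff ⟨Real.neg_one_lt_tanh u, Real.tanh_lt_one u⟩
    ⟨Real.neg_one_lt_tanh v, Real.tanh_lt_one v⟩, Real.artanh_tanh, Real.artanh_tanh]

lemma tanh_pos {u : ℝ} (h : 0 < u) : 0 < Real.tanh u := by
  rwa [← Real.artanh_lt_artanh_iff (by norm_num) ⟨Real.neg_one_lt_tanh u, Real.tanh_lt_one u⟩,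
    Real.artanh_tanh, Real.artanh_zero]

lemma tendsto_tanh_zero : Tendsto Real.tanh (𝓝 0) (𝓝 0) := by
  have h := (Real.continuous_sinh.tendsto 0).div (Real.continuous_cosh.tendsto 0) (by simp)
  rw [show Real.tanh = Real.sinh / Real.cosh from funext Real.tanh_eq_sinh_div_cosh]
  simpa using h

variable (M : ℕ) [NeZero M] {β : ℝ} (hβ : 0 < β) {Γ : ℕ → ℝ} (hΓ : ∀ t, 0 < Γ t)
include hβ hΓ

lemma tanh_field_pos (t : ℕ) : 0 < Real.tanh (β * Γ t / M) :=
  tanh_pos (div_pos (mul_pos hβ (hΓ t)) (Nat.cast_pos.2 (NeZero.pos M)))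

lemma γtfim_pos (t : ℕ) : 0 < γtfim M β Γ t := by
  have h := tanh_field_pos M hβ hΓ t
  have : 1 < 1 / Real.tanh (β * Γ t / M) := by
    rw [lt_div_iff₀ h, one_mul]; exact Real.tanh_lt_one _
  exact mul_pos one_half_pos (Real.log_pos this)

lemma γtfim_monotone (hanti : Antitone Γ) : Monotone (γtfim M β Γ) := fun a b hab => by
  have h : Real.tanh (β * Γ b / M) ≤ Real.tanh (β * Γ a / M) :=
    tanh_le_tanh (by gcongr; exact hanti hab)
  have hb := tanh_field_pos M hβ hΓ b
  exact mul_le_mul_of_nonneg_left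
    (Real.log_le_log (one_div_pos.2 (hb.trans_le h)) (one_div_le_one_div_of_le hb h))
    one_half_pos.le

lemma tendsto_γtfim (hlim : Tendsto Γ atTop (𝓝 0)) : Tendsto (γtfim M β Γ) atTop atTop := by
  have hfield : Tendsto (fun t => β * Γ t / M) atTop (𝓝 0) := by
    simpa using (hlim.const_mul β).div_const (M : ℝ)
  have hu : Tendsto (fun t => Real.tanh (β * Γ t / M)) atTop (𝓝[>] 0) :=
    tendsto_nhdsWithin_iff.2
      ⟨tendsto_tanh_zero.comp hfield, Eventually.of_forall (tanh_field_pos M hβ hΓ)⟩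
  refine ((Real.tendsto_log_atTop.comp hu.inv_tendsto_nhdsGT_zero).const_mul_atTop
    one_half_pos).congr fun t => ?_
  simp [γtfim]

/-- The annealing schedule bounds the coupling by `γ(t) ≤ log (t + 2) / (R L1)`. -/
lemma one_div_le_exp_neg_γtfim {RL : ℝ} (hRL : 0 < RL)
    (hsched : ∀ t : ℕ, Γ t ≥ ((M : ℝ) / β) * artanh (((t : ℝ) + 2) ^ (-(2 / RL)))) (t : ℕ) :
    1 / ((t : ℝ) + 2) ≤ Real.exp (-(RL * γtfim M β Γ t)) := by
  have hM : (0 : ℝ) < M := Nat.cast_pos.2 (NeZero.pos M)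
  have ht : (1 : ℝ) < t + 2 := by linarith [(t.cast_nonneg : (0 : ℝ) ≤ t)]
  set a := ((t : ℝ) + 2) ^ (-(2 / RL))
  have ha0 : 0 < a := Real.rpow_pos_of_pos (by linarith) _
  have ha1 : a < 1 := Real.rpow_lt_one_of_one_lt_of_neg ht (neg_lt_zero.2 (div_pos two_pos hRL))
  have htanh : a ≤ Real.tanh (β * Γ t / M) := by
    have h : Real.artanh a ≤ β * Γ t / M := by
      rw [Real.artanh_eq_half_log ⟨by linarith, ha1.le⟩, le_div_iff₀ hM]
      have := hsched t
      rw [ge_iff_le, div_mul_eq_mul_div, div_le_iff₀ hβ] at this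
      unfold artanh at this
      linarith
    calc a = Real.tanh (Real.artanh a) := (Real.tanh_artanh ⟨by linarith, ha1⟩).symm
      _ ≤ _ := tanh_le_tanh h
  have hγ : γtfim M β Γ t ≤ Real.log ((t : ℝ) + 2) / RL := by
    calc γtfim M β Γ t ≤ 1 / 2 * Real.log (1 / a) := by
          have := tanh_field_pos M hβ hΓ t
          unfold γtfim
          gcongr
      _ = Real.log ((t : ℝ) + 2) / RL := by
          rw [one_div a, Real.log_inv, Real.log_rpow (by linarith)]
          ring
  rw [le_div_iff₀ hRL] at hγ
  calc 1 / ((t : ℝ) + 2) = Real.exp (-Real.log ((t : ℝ) + 2)) := by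
        rw [Real.exp_neg, Real.exp_log (by linarith), one_div]
    _ ≤ _ := Real.exp_le_exp.2 (by linarith)

end TransverseFieldIsing

/-- Corollary: strong ergodicity of QA-PIMC for the TFIM.  The
inhomogeneous Markov chain generated by the Suzuki–Trotter Boltzmann factor of the
transverse-field Ising model is strongly ergodic, converging to the equilibrium state
of the classical interaction term alone, provided
`Γ(t) ≥ (M/β) artanh ((t+2)^(-2/(R L1)))`. -/
theorem tfim_pimc_stronglyErgodic
    (N M : ℕ) [NeZero M] (β : ℝ) (hβ : 0 < β)
    (J : Fin (N + 1) → Fin (N + 1) → ℝ)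
    (Γ : ℕ → ℝ) (hΓpos : ∀ t, 0 < Γ t) (hΓanti : Antitone Γ)
    (hΓlim : Tendsto Γ atTop (nhds 0))
    (P : (Fin (N + 1) × Fin M → Bool) → (Fin (N + 1) × Fin M → Bool) → ℝ)
    (hP : IsGenProb P)
    (g : ℝ → ℝ) (hg : IsAcceptFn g) (hg1 : 0 < g 1)
    (hne : ∃ x, x ∉ Sm P (F1tfim N M)) (hL1 : 0 < Lmax P (F1tfim N M))
    (hsched : ∀ t : ℕ, Γ t ≥ ((M : ℝ) / β) *
      artanh (((t : ℝ) + 2) ^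
        (-(2 / ((Rnum P (F1tfim N M) : ℝ) * Lmax P (F1tfim N M)))))) :
    StronglyErgodicTo
      (Gpimc P g (F0tfim N M β J) (F1tfim N M) 1 (fun t => 1 / γtfim M β Γ t))
      (rLimit (F0tfim N M β J) (F1tfim N M) 1) := by
  have hRL : 0 < (Rnum P (F1tfim N M) : ℝ) * Lmax P (F1tfim N M) :=
    mul_pos (Nat.cast_pos.2 (Rnum_pos hP _ hne)) hL1
  exact stronglyErgodicTo_anneal hP hg (F0tfim N M β J) (F1tfim N M) hg1 hne
    (fun t => (γtfim_pos M hβ hΓpos t).le) (γtfim_monotone M hβ hΓpos hΓanti)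
    (tendsto_γtfim M hβ hΓpos hΓlim) (one_div_le_exp_neg_γtfim M hβ hΓpos hRL hsched)

end QAPaper
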